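/- For every integer n ≥ −1, every i ∈ Fin d, j ∈ ℕ and every k ∈ ℤ, one has the commutator identity L(n) ∘ a_{i,j}(k) − a_{i,j}(k) ∘ L(n) = −k·a_{i,j}(n+k) as ℂ-linear endomorphisms of R (Proposition 3.1, equation (3.2)). -/

import Mathlib

/-!
`L(n)` is a sum `∑_v P_v ∘ ∂_v` over the variables `v = (i, j, m)`, where `P_v` is
`(l/2)(n-m)m·∂_{(i,j,n-m)}` for `m < n`, `m·X_{(i,j,m-n)}` for `m > n`, and `0` for `m = n`.
By the Leibniz rule, commuting `X_w` or `∂_w` past `P_v ∘ ∂_v` leaves a correction only when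
`v = w` or when `v` is the unique variable that `P_v` pairs with `w`, so each commutator
collapses to at most two terms. These recombine into `-k·a_{i,j}(n+k)` in each of the three
cases `k < 0`, `k = 0`, `k > 0` of the definition of `a_{i,j}(k)`.
-/

open MvPolynomial

/-- Value of the operator `L(n)` on the monomial `X^e`, in the polynomial realization of `M(l)`:
`L(n) = (l/2)·∑_{i,j} ∑_{m=1}^{n-1} m(n-m)·∂_{i,j,m}∘∂_{i,j,n-m}
        + ∑_{i,j} ∑_{m ≥ max(1,n+1)} m·X_{i,j,m-n}∘∂_{i,j,m}`;
on a fixed monomial only finitely many summands are nonzero, namely those whose rightmost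
derivative variable lies in the support of `e`. -/
noncomputable def LnMono (d : ℕ) (l : ℂ) (n : ℤ)
    (e : (Fin d × ℕ × ℕ+) →₀ ℕ) : MvPolynomial (Fin d × ℕ × ℕ+) ℂ :=
  (l / 2) • (∑ v ∈ e.support,
      if h : ((v.2.2 : ℕ) : ℤ) < n then
        (((n - ((v.2.2 : ℕ) : ℤ)) * ((v.2.2 : ℕ) : ℤ) : ℤ) : ℂ) •
          pderiv (((v.1, v.2.1, ⟨(n - ((v.2.2 : ℕ) : ℤ)).toNat, by omega⟩) : Fin d × ℕ × ℕ+))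
            (pderiv v (monomial e (1 : ℂ)))
      else 0)
  + ∑ v ∈ e.support,
      if h : n < ((v.2.2 : ℕ) : ℤ) then
        (((v.2.2 : ℕ) : ℤ) : ℂ) •
          ((X (v.1, v.2.1, (⟨(((v.2.2 : ℕ) : ℤ) - n).toNat, by omega⟩ : ℕ+)) : MvPolynomial (Fin d × ℕ × ℕ+) ℂ) *
            pderiv v (monomial e (1 : ℂ)))
      else 0

/-- The operator `L(n)` (for any `n : ℤ`; only `n ≥ -1` is used) on the polynomial
realization `R = MvPolynomial (Fin d × ℕ × ℕ+) ℂ` of `M(l)`, defined on the monomial basis. -/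
noncomputable def Ln (d : ℕ) (l : ℂ) (n : ℤ) :
    Module.End ℂ (MvPolynomial (Fin d × ℕ × ℕ+) ℂ) :=
  (basisMonomials (Fin d × ℕ × ℕ+) ℂ).constr ℂ (LnMono d l n)

/-- The operators `a_{i,j}(k)` of the polynomial realization of `M(l)` (with `λ = 0`):
`a_{i,j}(k) = k·l·∂_{i,j,k}` for `k > 0`, `a_{i,j}(0) = 0`, and `a_{i,j}(k) = X_{i,j,-k}`
(multiplication) for `k < 0`. -/
noncomputable def aOp0 (d : ℕ) (l : ℂ) (i : Fin d) (j : ℕ) (k : ℤ) :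
    Module.End ℂ (MvPolynomial (Fin d × ℕ × ℕ+) ℂ) :=
  if hk : 0 < k then
    ((k : ℂ) * l) • (pderiv (i, j, (⟨k.toNat, by omega⟩ : ℕ+))).toLinearMap
  else if hk0 : k = 0 then
    0
  else
    LinearMap.mulLeft ℂ (X (i, j, (⟨(-k).toNat, by omega⟩ : ℕ+)))

namespace MvPolynomial

variable {R σ : Type*}

theorem pderiv_pderiv_comm [CommRing R] (a b : σ) (p : MvPolynomial σ R) :
    pderiv a (pderiv b p) = pderiv b (pderiv a p) := by
  have hcomm :
      ⁅pderiv a, pderiv b⁆ = (0 : Derivation R (MvPolynomial σ R) (MvPolynomial σ R)) :=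
    derivation_ext fun v => by
      classical
      rw [Derivation.commutator_apply, pderiv_X, pderiv_X]
      simp [Pi.single_apply, apply_ite (pderiv _)]
  have := congr($hcomm p)
  rwa [Derivation.commutator_apply, Derivation.zero_apply, sub_eq_zero] at this

theorem vars_pderiv_subset [CommSemiring R] (a : σ) (p : MvPolynomial σ R) :
    (pderiv a p).vars ⊆ p.vars := by
  classical
  intro v hv
  obtain ⟨m, hm, hvm⟩ := (mem_vars_iff_mem_support v).1 hv
  rw [mem_support_iff, coeff_pderiv] at hm
  refine (mem_vars_iff_mem_support v).2
    ⟨m + Finsupp.single a 1, mem_support_iff.2 (left_ne_zero_of_mul hm), ?_⟩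
  exact Finsupp.support_mono le_self_add hvm

theorem pderiv_X_mul [CommSemiring R] [DecidableEq σ] (a b : σ) (p : MvPolynomial σ R) :
    pderiv a (X b * p) = X b * pderiv a p + if a = b then p else 0 := by
  rw [pderiv_mul, pderiv_X, add_comm]
  rcases eq_or_ne a b with rfl | h
  · simp
  · simp [Ne.symm h, h]

theorem sum_ite_smul_pderiv [CommSemiring R] {p : MvPolynomial σ R} {S : Finset σ}
    (hS : p.vars ⊆ S) {P : σ → Prop} [DecidablePred P] {Q : Prop} [Decidable Q] {u : σ}
    (hP : ∀ v, P v ↔ Q ∧ v = u) (c : σ → R) :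
    ∑ v ∈ S, (if P v then c v • pderiv v p else 0) = if Q then c u • pderiv u p else 0 := by
  refine (Finset.sum_eq_single u (fun v _ hvu => if_neg fun hv => hvu ((hP v).1 hv).2)
    fun hu => ?_).trans (if_congr ((hP u).trans (and_iff_left rfl)) rfl rfl)
  rw [pderiv_eq_zero_of_notMem_vars fun h => hu (hS h), smul_zero, ite_self]

end MvPolynomial

namespace HeisenbergVOA

variable {d : ℕ}

-- For `t ≤ 0` this is a junk variable, of mode `1`.
def modeVar (i : Fin d) (j : ℕ) (t : ℤ) : Fin d × ℕ × ℕ+ := (i, j, t.toNat.toPNat')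

theorem mk_eq_modeVar (i : Fin d) (j : ℕ) {t : ℤ} (ht : 0 < t.toNat) :
    ((i, j, ⟨t.toNat, ht⟩) : Fin d × ℕ × ℕ+) = modeVar i j t :=
  Prod.ext rfl (Prod.ext rfl (PNat.eq (PNat.toPNat'_coe ht).symm))

theorem modeVar_snd_snd (i : Fin d) (j : ℕ) {t : ℤ} (ht : 0 < t) :
    ((modeVar i j t).2.2 : ℤ) = t := by
  simp only [modeVar, PNat.toPNat'_coe (Int.lt_toNat.2 ht)]
  omega

theorem modeVar_eq_iff {i : Fin d} {j : ℕ} {t : ℤ} (ht : 0 < t) {v : Fin d × ℕ × ℕ+} :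
    modeVar i j t = v ↔ v.1 = i ∧ v.2.1 = j ∧ (v.2.2 : ℤ) = t := by
  constructor
  · rintro rfl
    exact ⟨rfl, rfl, modeVar_snd_snd i j ht⟩
  · rintro ⟨rfl, rfl, hv⟩
    have := modeVar_snd_snd v.1 v.2.1 ht
    exact Prod.ext rfl (Prod.ext rfl (PNat.eq (by omega)))

theorem lt_and_modeVar_sub_eq_iff {n : ℤ} {v w : Fin d × ℕ × ℕ+} :
    (v.2.2 : ℤ) < n ∧ modeVar v.1 v.2.1 (n - v.2.2) = w ↔
      (w.2.2 : ℤ) < n ∧ v = modeVar w.1 w.2.1 (n - w.2.2) := by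
  have := v.2.2.pos
  have := w.2.2.pos
  constructor
  · rintro ⟨hv, hvw⟩
    obtain ⟨h1, h2, h3⟩ := (modeVar_eq_iff (by omega)).1 hvw
    exact ⟨by omega, ((modeVar_eq_iff (by omega)).2 ⟨h1.symm, h2.symm, by omega⟩).symm⟩
  · rintro ⟨hw, rfl⟩
    have hu := modeVar_snd_snd w.1 w.2.1 (sub_pos.2 hw)
    exact ⟨by omega, (modeVar_eq_iff (by omega)).2 ⟨rfl, rfl, by omega⟩⟩

theorem gt_and_modeVar_sub_eq_iff {n : ℤ} {v w : Fin d × ℕ × ℕ+} :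
    n < (v.2.2 : ℤ) ∧ modeVar v.1 v.2.1 (v.2.2 - n) = w ↔
      0 < n + (w.2.2 : ℤ) ∧ v = modeVar w.1 w.2.1 (n + w.2.2) := by
  have := v.2.2.pos
  have := w.2.2.pos
  constructor
  · rintro ⟨hv, hvw⟩
    obtain ⟨h1, h2, h3⟩ := (modeVar_eq_iff (by omega)).1 hvw
    exact ⟨by omega, ((modeVar_eq_iff (by omega)).2 ⟨h1.symm, h2.symm, by omega⟩).symm⟩
  · rintro ⟨hw, rfl⟩
    have hu := modeVar_snd_snd w.1 w.2.1 hw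
    exact ⟨by omega, (modeVar_eq_iff (by omega)).2 ⟨rfl, rfl, by omega⟩⟩

noncomputable def LnCoeff (l : ℂ) (n : ℤ) (v : Fin d × ℕ × ℕ+) :
    Module.End ℂ (MvPolynomial (Fin d × ℕ × ℕ+) ℂ) :=
  if (v.2.2 : ℤ) < n then
    (l / 2 * (((n - v.2.2) * v.2.2 : ℤ) : ℂ)) •
      (pderiv (modeVar v.1 v.2.1 (n - v.2.2))).toLinearMap
  else if n < (v.2.2 : ℤ) then
    ((v.2.2 : ℤ) : ℂ) • LinearMap.mulLeft ℂ (X (modeVar v.1 v.2.1 (v.2.2 - n)))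
  else 0

theorem LnCoeff_apply (l : ℂ) (n : ℤ) (v : Fin d × ℕ × ℕ+)
    (p : MvPolynomial (Fin d × ℕ × ℕ+) ℂ) :
    LnCoeff l n v p =
      if (v.2.2 : ℤ) < n then
        (l / 2 * (((n - v.2.2) * v.2.2 : ℤ) : ℂ)) • pderiv (modeVar v.1 v.2.1 (n - v.2.2)) p
      else if n < (v.2.2 : ℤ) then
        ((v.2.2 : ℤ) : ℂ) • (X (modeVar v.1 v.2.1 (v.2.2 - n)) * p)
      else 0 := by
  unfold LnCoeff
  split_ifs <;> rfl

theorem Ln_monomial_eq_sum (l : ℂ) (n : ℤ) (e : (Fin d × ℕ × ℕ+) →₀ ℕ) :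
    Ln d l n (monomial e 1) = ∑ v ∈ e.support, LnCoeff l n v (pderiv v (monomial e 1)) := by
  have hbasis := (basisMonomials (Fin d × ℕ × ℕ+) ℂ).constr_basis ℂ (LnMono d l n) e
  rw [coe_basisMonomials] at hbasis
  rw [Ln, hbasis, LnMono, Finset.smul_sum, ← Finset.sum_add_distrib]
  refine Finset.sum_congr rfl fun v _ => ?_
  rw [LnCoeff_apply]
  split_ifs <;>
    first | omega | simp only [mk_eq_modeVar, smul_smul, smul_zero, add_zero, zero_add]

theorem Ln_apply_eq_sum (l : ℂ) (n : ℤ) (p : MvPolynomial (Fin d × ℕ × ℕ+) ℂ)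
    {S : Finset (Fin d × ℕ × ℕ+)} (hS : p.vars ⊆ S) :
    Ln d l n p = ∑ v ∈ S, LnCoeff l n v (pderiv v p) := by
  have hmono : ∀ e ∈ p.support, ∀ c : ℂ,
      Ln d l n (monomial e c) = ∑ v ∈ S, LnCoeff l n v (pderiv v (monomial e c)) := by
    intro e he c
    have hc : monomial e c = c • monomial e 1 := by rw [smul_monomial, smul_eq_mul, mul_one]
    simp only [hc, map_smul, Derivation.map_smul, Ln_monomial_eq_sum]
    rw [← Finset.smul_sum]
    refine congrArg (c • ·) (Finset.sum_subset
      (fun v hv => hS ((mem_vars_iff_mem_support v).2 ⟨e, he, hv⟩)) fun v _ hv => ?_)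
    rw [pderiv_eq_zero_of_notMem_vars (by rwa [vars_monomial one_ne_zero]), map_zero]
  conv_lhs => rw [p.as_sum]
  conv_rhs => rw [p.as_sum]
  simp only [map_sum]
  rw [Finset.sum_comm]
  exact Finset.sum_congr rfl fun e he => hmono e he _

theorem LnCoeff_X_mul (l : ℂ) (n : ℤ) (v w : Fin d × ℕ × ℕ+)
    (q : MvPolynomial (Fin d × ℕ × ℕ+) ℂ) :
    LnCoeff l n v (X w * q) = X w * LnCoeff l n v q +
      if (v.2.2 : ℤ) < n ∧ modeVar v.1 v.2.1 (n - v.2.2) = w then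
        (l / 2 * (((n - v.2.2) * v.2.2 : ℤ) : ℂ)) • q
      else 0 := by
  simp only [LnCoeff_apply]
  split_ifs <;> simp_all [mul_left_comm (X w)]

theorem pderiv_LnCoeff (l : ℂ) (n : ℤ) (v w : Fin d × ℕ × ℕ+)
    (q : MvPolynomial (Fin d × ℕ × ℕ+) ℂ) :
    pderiv w (LnCoeff l n v q) = LnCoeff l n v (pderiv w q) +
      if n < (v.2.2 : ℤ) ∧ modeVar v.1 v.2.1 (v.2.2 - n) = w then ((v.2.2 : ℤ) : ℂ) • q
      else 0 := by
  simp only [LnCoeff_apply]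
  split_ifs <;> first | omega | simp_all [pderiv_pderiv_comm w]

theorem aOp0_of_pos (l : ℂ) (i : Fin d) (j : ℕ) {k : ℤ} (hk : 0 < k) :
    aOp0 d l i j k = ((k : ℂ) * l) • (pderiv (modeVar i j k)).toLinearMap := by
  rw [aOp0, dif_pos hk, ← mk_eq_modeVar i j (Int.lt_toNat.2 hk)]
  rfl

theorem aOp0_of_neg (l : ℂ) (i : Fin d) (j : ℕ) {k : ℤ} (hk : k < 0) :
    aOp0 d l i j k = LinearMap.mulLeft ℂ (X (modeVar i j (-k))) := by
  rw [aOp0, dif_neg (not_lt.2 hk.le), dif_neg hk.ne,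
    ← mk_eq_modeVar i j (Int.lt_toNat.2 (neg_pos.2 hk))]

theorem aOp0_zero (l : ℂ) (i : Fin d) (j : ℕ) : aOp0 d l i j 0 = 0 := by
  simp [aOp0]

theorem Ln_X_mul_sub_X_mul_Ln (l : ℂ) (n : ℤ) (w : Fin d × ℕ × ℕ+)
    (p : MvPolynomial (Fin d × ℕ × ℕ+) ℂ) :
    Ln d l n (X w * p) - X w * Ln d l n p =
      ((w.2.2 : ℤ) : ℂ) • aOp0 d l w.1 w.2.1 (n - w.2.2) p := by
  have hvars : (X w * p).vars ⊆ insert w p.vars := by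
    rw [Finset.insert_eq, ← vars_X (R := ℂ)]
    exact vars_mul _ _
  rw [Ln_apply_eq_sum l n _ hvars, Ln_apply_eq_sum l n p (Finset.subset_insert w _),
    Finset.mul_sum, ← Finset.sum_sub_distrib]
  simp only [pderiv_X_mul, map_add, LnCoeff_X_mul, apply_ite (LnCoeff l n _), map_zero,
    add_assoc, add_sub_cancel_left]
  rw [Finset.sum_add_distrib,
    sum_ite_smul_pderiv (Finset.subset_insert w _) fun v => lt_and_modeVar_sub_eq_iff,
    Finset.sum_ite_eq' _ _ (fun v => LnCoeff l n v p), if_pos (Finset.mem_insert_self w _),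
    LnCoeff_apply]
  rcases lt_trichotomy (w.2.2 : ℤ) n with hlt | heq | hgt
  · rw [if_pos hlt, if_pos hlt, aOp0_of_pos l _ _ (sub_pos.2 hlt),
      modeVar_snd_snd _ _ (sub_pos.2 hlt), ← add_smul, LinearMap.smul_apply, smul_smul]
    congr 1
    push_cast
    ring
  · rw [if_neg heq.not_lt, if_neg heq.not_lt, if_neg heq.not_gt, heq, sub_self, aOp0_zero]
    simp
  · rw [if_neg (lt_asymm hgt), if_neg (lt_asymm hgt), if_pos hgt,
      aOp0_of_neg l _ _ (sub_neg.2 hgt), neg_sub, zero_add]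
    rfl

theorem smul_Ln_pderiv_sub_pderiv_Ln (l : ℂ) (n : ℤ) (w : Fin d × ℕ × ℕ+)
    (hnw : 0 ≤ n + (w.2.2 : ℤ)) (p : MvPolynomial (Fin d × ℕ × ℕ+) ℂ) :
    l • (Ln d l n (pderiv w p) - pderiv w (Ln d l n p)) =
      -aOp0 d l w.1 w.2.1 (n + w.2.2) p := by
  rw [Ln_apply_eq_sum l n _ (vars_pderiv_subset w p), Ln_apply_eq_sum l n p subset_rfl,
    map_sum, ← Finset.sum_sub_distrib]
  simp only [pderiv_LnCoeff, pderiv_pderiv_comm w, sub_add_cancel_left]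
  rw [Finset.sum_neg_distrib, sum_ite_smul_pderiv subset_rfl fun v => gt_and_modeVar_sub_eq_iff]
  rcases hnw.lt_or_eq with hpos | hzero
  · rw [if_pos hpos, aOp0_of_pos l _ _ hpos, modeVar_snd_snd _ _ hpos, LinearMap.smul_apply,
      smul_neg, smul_smul, mul_comm l]
    rfl
  · rw [if_neg hzero.not_lt, ← hzero, aOp0_zero]
    simp

end HeisenbergVOA

open HeisenbergVOA in
theorem statement5_general (d : ℕ) (l : ℂ)
    (n : ℤ) (hn : -1 ≤ n) (i : Fin d) (j : ℕ) (k : ℤ) :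
    Ln d l n * aOp0 d l i j k - aOp0 d l i j k * Ln d l n
      = (-(k : ℂ)) • aOp0 d l i j (n + k) := by
  refine LinearMap.ext fun p => ?_
  simp only [LinearMap.sub_apply, Module.End.mul_apply, LinearMap.smul_apply]
  rcases lt_trichotomy k 0 with hk | rfl | hk
  · have hcomm := Ln_X_mul_sub_X_mul_Ln l n (modeVar i j (-k)) p
    rw [modeVar_snd_snd i j (neg_pos.2 hk), sub_neg_eq_add] at hcomm
    rw [aOp0_of_neg l i j hk, LinearMap.mulLeft_apply, LinearMap.mulLeft_apply, hcomm]
    push_cast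
    rfl
  · simp [aOp0_zero]
  · have hcomm := smul_Ln_pderiv_sub_pderiv_Ln l n (modeVar i j k)
      (by rw [modeVar_snd_snd i j hk]; omega) p
    rw [modeVar_snd_snd i j hk] at hcomm
    rw [aOp0_of_pos l i j hk]
    simp only [LinearMap.smul_apply, Derivation.coeFn_coe, map_smul, ← smul_sub, mul_smul, hcomm]
    rw [neg_smul, smul_neg]
    rfl

/-- Proposition 3.1, eq. (3.2): `[L(n), a_{i,j}(k)] = -k·a_{i,j}(n+k)`
for all `n ≥ -1`, `i ∈ Fin d`, `j ∈ ℕ`, `k ∈ ℤ`. -/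
theorem statement5 (d : ℕ) (hd : 0 < d) (l : ℂ) (hl : l ≠ 0)
    (n : ℤ) (hn : -1 ≤ n) (i : Fin d) (j : ℕ) (k : ℤ) :
    Ln d l n * aOp0 d l i j k - aOp0 d l i j k * Ln d l n
      = (-(k : ℂ)) • aOp0 d l i j (n + k) :=
  statement5_general d l n hn i j k
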